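/- Let R be a field and C̃ an S-complex over R with h(C̃) = 0. Then C̃ is locally equivalent to the trivial S-complex C̃⁰ = R. In fact there exists α ∈ C_* with d(α) = δ₂(1), the map λ̃: C̃⁰ → C̃ with components λ = 0, μ = 0, Δ₁ = 0 and Δ₂(1) = α is a morphism of S-complexes, and there also exists a morphism of S-complexes C̃ → C̃⁰. -/

import Mathlib

/-!  S-complexes over a commutative ring `R` (following Daemi–Scaduto).

An S-complex is a ℤ-graded finitely generated free chain complex
`C̃ = C ⊕ C[1] ⊕ R` determined by the data of `C` together with maps
`d, v, δ₁, δ₂`.  We encode the graded module `C` by a single module `Tot`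
together with an internal ℤ-grading by submodules, and we carry the sign
map `ε` (multiplication by `(-1)^i` on the degree `i` part) as data. -/

universe u

/-- The data of an S-complex over `R`: a module `Tot` (the total module of the
ℤ-graded module `C_*`), its grading, the sign map `ε`, and the structure maps
`d : C_* → C_{*-1}`, `v : C_* → C_{*-2}`, `δ₁ : C_* → R` (supported in degree 1),
`δ₂ : R → C_{-2}`. -/
structure SComplexData (R : Type u) [CommRing R] where
  Tot : Type u
  [acg : AddCommGroup Tot]
  [mod : Module R Tot]
  grading : ℤ → Submodule R Tot
  sign : Tot →ₗ[R] Tot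
  d : Tot →ₗ[R] Tot
  v : Tot →ₗ[R] Tot
  δ₁ : Tot →ₗ[R] R
  δ₂ : R →ₗ[R] Tot

attribute [instance] SComplexData.acg SComplexData.mod

namespace SComplexData

variable {R : Type u} [CommRing R]

/-- The axioms making the data of `X : SComplexData R` into a genuine S-complex:
the grading is an internal direct sum decomposition into finitely generated free
pieces, the sign map is `(-1)^i` on the degree `i` piece, the structure maps are
graded of the appropriate degrees (`δ₁` supported on `C_1`, `δ₂` valued in `C_{-2}`),
and the S-complex relations `d∘d = 0`, `δ₁∘d = 0`, `d∘δ₂ = 0`,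
`d∘v − v∘d − δ₂∘δ₁ = 0` hold; the latter are equivalent to `d̃ ∘ d̃ = 0` for the
differential `d̃(α, β, r) = (dα, vα − dβ + δ₂ r, δ₁ α)` on `C̃ = C ⊕ C[1] ⊕ R`. -/
structure IsSComplex (X : SComplexData R) : Prop where
  internal : DirectSum.IsInternal X.grading
  free : ∀ i : ℤ, Module.Free R ↥(X.grading i)
  finite : Module.Finite R X.Tot
  sign_spec : ∀ i : ℤ, ∀ x ∈ X.grading i, X.sign x = if Even i then x else -x
  d_deg : ∀ i : ℤ, (X.grading i).map X.d ≤ X.grading (i - 1)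
  v_deg : ∀ i : ℤ, (X.grading i).map X.v ≤ X.grading (i - 2)
  δ₁_deg : ∀ i : ℤ, i ≠ 1 → ∀ x ∈ X.grading i, X.δ₁ x = 0
  δ₂_deg : LinearMap.range X.δ₂ ≤ X.grading (-2)
  d_d : X.d ∘ₗ X.d = 0
  δ₁_d : X.δ₁ ∘ₗ X.d = 0
  d_δ₂ : X.d ∘ₗ X.δ₂ = 0
  d_v : X.d ∘ₗ X.v - X.v ∘ₗ X.d - X.δ₂ ∘ₗ X.δ₁ = 0

/-- A morphism of S-complexes `λ̃ : C̃ → C̃'`, i.e. a degree-0 chain map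
`λ̃(α, β, r) = (λ α, μ α + λ β + Δ₂ r, Δ₁ α + r)`, recorded through its
components `λ, μ, Δ₁, Δ₂` (here `l` stands for `λ`). -/
structure SMorphism (X Y : SComplexData R) where
  l : X.Tot →ₗ[R] Y.Tot
  μ : X.Tot →ₗ[R] Y.Tot
  Δ₁ : X.Tot →ₗ[R] R
  Δ₂ : R →ₗ[R] Y.Tot
  l_deg : ∀ i : ℤ, (X.grading i).map l ≤ Y.grading i
  μ_deg : ∀ i : ℤ, (X.grading i).map μ ≤ Y.grading (i - 1)
  Δ₁_deg : ∀ i : ℤ, i ≠ 0 → ∀ x ∈ X.grading i, Δ₁ x = 0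
  Δ₂_deg : LinearMap.range Δ₂ ≤ Y.grading (-1)
  comm_d : l ∘ₗ X.d = Y.d ∘ₗ l
  comm_δ₁ : Δ₁ ∘ₗ X.d + X.δ₁ = Y.δ₁ ∘ₗ l
  comm_δ₂ : Y.d ∘ₗ Δ₂ + l ∘ₗ X.δ₂ = Y.δ₂
  comm_v : μ ∘ₗ X.d + Y.d ∘ₗ μ + l ∘ₗ X.v - Y.v ∘ₗ l + Δ₂ ∘ₗ X.δ₁ - Y.δ₂ ∘ₗ Δ₁ = 0

end SComplexData

/-- Functions `ℕ → M` with finitely many nonzero values (i.e. support bounded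
above); this realizes the polynomial module `M[x]`. -/
def NatBdd (R : Type u) [CommRing R] (M : Type u) [AddCommGroup M] [Module R M] :
    Submodule R (ℕ → M) where
  carrier := {f | ∃ N : ℕ, ∀ n : ℕ, N < n → f n = 0}
  add_mem' := by
    rintro f g ⟨N, hN⟩ ⟨K, hK⟩
    refine ⟨max N K, fun n hn => ?_⟩
    have h1 := hN n (lt_of_le_of_lt (le_max_left N K) hn)
    have h2 := hK n (lt_of_le_of_lt (le_max_right N K) hn)
    show f n + g n = 0
    rw [h1, h2, add_zero]
  zero_mem' := ⟨0, fun _ _ => rfl⟩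
  smul_mem' := by
    rintro c f ⟨N, hN⟩
    refine ⟨N, fun n hn => ?_⟩
    show c • f n = 0
    rw [hN n hn, smul_zero]

/-- Functions `ℤ → M` with support bounded above; for `M = R` this realizes the
ring `R[[x⁻¹, x]]` of Laurent series with finitely many positive powers of `x`. -/
def IntBdd (R : Type u) [CommRing R] (M : Type u) [AddCommGroup M] [Module R M] :
    Submodule R (ℤ → M) where
  carrier := {f | ∃ N : ℤ, ∀ n : ℤ, N < n → f n = 0}
  add_mem' := by
    rintro f g ⟨N, hN⟩ ⟨K, hK⟩
    refine ⟨max N K, fun n hn => ?_⟩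
    have h1 := hN n (lt_of_le_of_lt (le_max_left N K) hn)
    have h2 := hK n (lt_of_le_of_lt (le_max_right N K) hn)
    show f n + g n = 0
    rw [h1, h2, add_zero]
  zero_mem' := ⟨0, fun _ _ => rfl⟩
  smul_mem' := by
    rintro c f ⟨N, hN⟩
    refine ⟨N, fun n hn => ?_⟩
    show c • f n = 0
    rw [hN n hn, smul_zero]

/-- The multiplication of `R[[x⁻¹, x]]`, realized as a convolution product on
functions `ℤ → R` with support bounded above. -/
noncomputable def lmul {R : Type u} [CommRing R] (f g : ↥(IntBdd R R)) : ↥(IntBdd R R) :=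
  ⟨fun n => ∑ᶠ i : ℤ, f.1 i * g.1 (n - i), by
    obtain ⟨N, hN⟩ := f.2
    obtain ⟨K, hK⟩ := g.2
    refine ⟨N + K, fun n hn => ?_⟩
    apply finsum_eq_zero_of_forall_eq_zero
    intro i
    by_cases h : N < i
    · rw [hN i h, zero_mul]
    · rw [hK (n - i) (by omega), mul_zero]⟩

namespace SComplexData

variable {R : Type u} [CommRing R]

/-- The carrier of the small equivariant complex `𝔣Ĉ_* = C_{*-1} ⊕ R[x]`,
with `R[x]` realized as finitely supported functions `ℕ → R`. -/
abbrev Small (X : SComplexData R) : Type u := X.Tot × ↥(NatBdd R R)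

/-- `Σᵢ vⁱ δ₂(aᵢ)` for a polynomial with coefficients `aᵢ`. -/
noncomputable def sumV (X : SComplexData R) (f : ↥(NatBdd R R)) : X.Tot :=
  ∑ᶠ i : ℕ, (X.v ^ i) (X.δ₂ (f.1 i))

/-- The differential `𝔡̂(α, Σᵢ aᵢxⁱ) = (dα − Σᵢ vⁱδ₂(aᵢ), 0)` of the small
equivariant complex. -/
noncomputable def smallD (X : SComplexData R) : X.Small → X.Small :=
  fun z => (X.d z.1 - X.sumV z.2, 0)

/-- The `R[x]`-module structure of the small equivariant complex:
`x · (α, p(x)) = (v(α), δ₁(α) + x·p(x))`; this is the action of `x`. -/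
noncomputable def xSmall (X : SComplexData R) : X.Small → X.Small :=
  fun z => (X.v z.1, ⟨fun n => if n = 0 then X.δ₁ z.1 else z.2.1 (n - 1), by
    obtain ⟨N, hN⟩ := z.2.2
    refine ⟨N + 1, fun n hn => ?_⟩
    show (if n = 0 then X.δ₁ z.1 else z.2.1 (n - 1)) = 0
    rw [if_neg (by omega)]
    exact hN (n - 1) (by omega)⟩)

/-- The map `𝔦 : 𝔣Ĉ_* → R[[x⁻¹, x]]`,
`𝔦(α, Σᵢ aᵢxⁱ) = Σ_{i ≤ −1} δ₁v^{−i−1}(α) xⁱ + Σᵢ aᵢxⁱ`. -/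
noncomputable def iota (X : SComplexData R) : X.Small → ↥(IntBdd R R) :=
  fun z => ⟨fun n => if n < 0 then X.δ₁ ((X.v ^ (-n - 1).toNat) z.1) else z.2.1 n.toNat, by
    obtain ⟨N, hN⟩ := z.2.2
    refine ⟨(N : ℤ), fun n hn => ?_⟩
    show (if n < 0 then X.δ₁ ((X.v ^ (-n - 1).toNat) z.1) else z.2.1 n.toNat) = 0
    rw [if_neg (by omega)]
    exact hN n.toNat (by omega)⟩

/-- `𝔍(C̃) = 𝔦(ker 𝔡̂)`, an `R[x]`-submodule of `R[[x⁻¹, x]]`, here recorded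
as a set. -/
noncomputable def JJ (X : SComplexData R) : Set ↥(IntBdd R R) :=
  X.iota '' {z | X.smallD z = 0}

/-- `DegEq Q n` means that the Laurent series `Q` is nonzero with `Deg Q = n`,
i.e. `n` is the largest exponent with nonzero coefficient. -/
def DegEq {R : Type u} [CommRing R] (Q : ↥(IntBdd R R)) (n : ℤ) : Prop :=
  Q.1 n ≠ 0 ∧ ∀ m : ℤ, n < m → Q.1 m = 0

/-- The set of degrees of nonzero elements of `𝔍(C̃)`. -/
noncomputable def degSet (X : SComplexData R) : Set ℤ :=
  {n : ℤ | ∃ Q ∈ X.JJ, DegEq Q n}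

/-- The Frøyshov invariant `h(C̃) = −inf {Deg Q : 0 ≠ Q ∈ 𝔍(C̃)}`. -/
noncomputable def hInv (X : SComplexData R) : ℤ := -sInf X.degSet

/-- The ideal `J_i(C̃) = {a ∈ R : ∃ Q = a·x^{−i} + (lower order terms) ∈ 𝔍(C̃)}`,
recorded as a set. -/
noncomputable def Jideal (X : SComplexData R) (i : ℤ) : Set R :=
  {a : R | ∃ Q ∈ X.JJ, (∀ m : ℤ, -i < m → Q.1 m = 0) ∧ Q.1 (-i) = a}

end SComplexData

namespace SComplexData

/-- The trivial S-complex `C̃⁰ = R`: its chain module is `C = 0` (so `C̃⁰`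
consists of the summand `R` alone, in degree `0`, with zero differential). -/
noncomputable def trivialS (R : Type u) [CommRing R] : SComplexData R where
  Tot := PUnit.{u + 1}
  grading := fun _ => ⊥
  sign := LinearMap.id
  d := 0
  v := 0
  δ₁ := 0
  δ₂ := 0

end SComplexData

/-!
Since `v` lowers the grading by two and a finitely generated graded module has only finitely many
nonzero pieces, `v` is nilpotent, say `v ^ N = 0`. Then `(0, xᴺ)` is a cycle of the small
equivariant complex and every series in `𝔍` has degree at least `-N`, so `h = 0` says that `0` is
the least degree occurring in `𝔍`. A cycle `(α, p)` with `𝔦(α, p)` of degree `0` has `p = a` a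
nonzero constant, and `d (a⁻¹ α) = δ₂ 1`. A cycle `(ξ, 0)` with `δ₁ ξ ≠ 0` would produce a series
of negative degree, so `δ₁` kills `ker d` and, over a field, factors through `d`. Projecting
`a⁻¹ α` to degree `-1` and the factor of `δ₁` to degree `0` yields the two morphisms.
-/

namespace DirectSum

section GradedProj

variable {ι R M N : Type*} [DecidableEq ι] [Semiring R] [AddCommMonoid M] [Module R M]
  (ℳ : ι → Submodule R M) [Decomposition ℳ]

def gradedProj (k : ι) : M →ₗ[R] M :=
  (ℳ k).subtype ∘ₗ component R ι (fun i => ℳ i) k ∘ₗ (decomposeLinearEquiv ℳ).toLinearMap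

theorem gradedProj_mem (k : ι) (x : M) : gradedProj ℳ k x ∈ ℳ k :=
  (decompose ℳ x k).2

theorem gradedProj_of_mem_same {k : ι} {x : M} (hx : x ∈ ℳ k) : gradedProj ℳ k x = x :=
  decompose_of_mem_same ℳ hx

theorem gradedProj_of_mem_ne {i k : ι} {x : M} (hx : x ∈ ℳ i) (hik : i ≠ k) :
    gradedProj ℳ k x = 0 :=
  decompose_of_mem_ne ℳ hx hik

theorem comp_gradedProj_of_forall_ne [AddCommMonoid N] [Module R N] (f : M →ₗ[R] N) {k : ι}
    (hf : ∀ i ≠ k, ∀ x ∈ ℳ i, f x = 0) : f ∘ₗ gradedProj ℳ k = f := by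
  refine decompose_lhom_ext ℳ fun i => LinearMap.ext fun ⟨x, hx⟩ => ?_
  by_cases hik : i = k
  · subst hik
    simp [gradedProj_of_mem_same ℳ hx]
  · simp [gradedProj_of_mem_ne ℳ hx hik, hf i hik x hx]

theorem gradedProj_comp_of_map_le [AddGroup ι] {M' : Type*} [AddCommMonoid M'] [Module R M']
    (ℳ' : ι → Submodule R M') [Decomposition ℳ'] (f : M →ₗ[R] M') (c : ι)
    (hf : ∀ i, (ℳ i).map f ≤ ℳ' (i - c)) (j : ι) :
    gradedProj ℳ' (j - c) ∘ₗ f = f ∘ₗ gradedProj ℳ j := by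
  refine decompose_lhom_ext ℳ fun i => LinearMap.ext fun ⟨x, hx⟩ => ?_
  have hfx : f x ∈ ℳ' (i - c) := hf i (Submodule.mem_map_of_mem hx)
  by_cases hij : i = j
  · subst hij
    simp [gradedProj_of_mem_same ℳ hx, gradedProj_of_mem_same ℳ' hfx]
  · simp [gradedProj_of_mem_ne ℳ hx hij, gradedProj_of_mem_ne ℳ' hfx (sub_left_injective.ne hij)]

end GradedProj

theorem pow_apply_mem_of_map_le {R M : Type*} [Semiring R] [AddCommMonoid M] [Module R M]
    (ℳ : ℤ → Submodule R M) (f : M →ₗ[R] M) (c : ℤ) (hf : ∀ i, (ℳ i).map f ≤ ℳ (i - c))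
    (n : ℕ) {i : ℤ} {x : M} (hx : x ∈ ℳ i) : (f ^ n) x ∈ ℳ (i - n * c) := by
  induction n with
  | zero => simpa using hx
  | succ n ih =>
    rw [pow_succ', Module.End.mul_apply, Nat.cast_succ, add_mul, one_mul, ← sub_sub]
    exact hf _ (Submodule.mem_map_of_mem ih)

theorem IsInternal.isNilpotent_of_map_le {R M : Type*} [Ring R] [AddCommGroup M] [Module R M]
    [IsNoetherian R M] {ℳ : ℤ → Submodule R M} (h : IsInternal ℳ) (f : M →ₗ[R] M) {c : ℤ}
    (hc : 0 < c) (hf : ∀ i, (ℳ i).map f ≤ ℳ (i - c)) : IsNilpotent f := by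
  let := h.chooseDecomposition
  have hfin : {i | ℳ i ≠ ⊥}.Finite := Submodule.finite_ne_bot_of_iSupIndep h.submodule_iSupIndep
  obtain ⟨L, hL⟩ := hfin.bddBelow
  obtain ⟨U, hU⟩ := hfin.bddAbove
  refine ⟨(U - L).toNat + 1, decompose_lhom_ext ℳ fun i => LinearMap.ext fun ⟨x, hx⟩ => ?_⟩
  have hfx := pow_apply_mem_of_map_le ℳ f c hf ((U - L).toNat + 1) hx
  by_cases hi : ℳ i = ⊥
  · simp [(Submodule.eq_bot_iff _).mp hi x hx]
  · have hlow : ℳ (i - ((U - L).toNat + 1 : ℕ) * c) = ⊥ := by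
      by_contra hne
      have h1 := hL hne
      have h2 := hU hi
      push_cast at h1
      nlinarith [Int.self_le_toNat (U - L)]
    simpa using (Submodule.eq_bot_iff _).mp hlow _ hfx

end DirectSum

theorem IntBdd.exists_degEq {R : Type u} [CommRing R] (Q : ↥(IntBdd R R)) {m : ℤ}
    (hm : Q.1 m ≠ 0) : ∃ n, m ≤ n ∧ SComplexData.DegEq Q n := by
  obtain ⟨N, hN⟩ := Q.2
  obtain ⟨n, hn, hmax⟩ := Int.exists_greatest_of_bdd (P := fun k => Q.1 k ≠ 0)
    ⟨N, fun k hk => by_contra fun hNk => hk (hN k (not_le.mp hNk))⟩ ⟨m, hm⟩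
  exact ⟨n, hmax m hm, hn, fun k hk => by_contra fun hQk => (hmax k hQk).not_gt hk⟩

namespace SComplexData

section SmallComplex

variable {R : Type u} [CommRing R] (X : SComplexData R)

theorem iota_apply_of_neg (z : X.Small) {n : ℤ} (hn : n < 0) :
    (X.iota z).1 n = X.δ₁ ((X.v ^ (-n - 1).toNat) z.1) :=
  if_pos hn

theorem iota_apply_of_nonneg (z : X.Small) {n : ℤ} (hn : 0 ≤ n) :
    (X.iota z).1 n = z.2.1 n.toNat :=
  if_neg (not_lt.mpr hn)

theorem smallD_eq_zero_iff (z : X.Small) : X.smallD z = 0 ↔ X.d z.1 = X.sumV z.2 := by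
  simp [smallD, Prod.ext_iff, sub_eq_zero]

theorem sumV_eq_of_forall_ne (p : ↥(NatBdd R R)) (n : ℕ) (hp : ∀ i ≠ n, p.1 i = 0) :
    X.sumV p = (X.v ^ n) (X.δ₂ (p.1 n)) :=
  finsum_eq_single _ n fun i hi => by rw [hp i hi, map_zero, map_zero]

theorem mem_degSet_of_v_pow_eq_zero [Nontrivial R] {N : ℕ} (hN : X.v ^ N = 0) :
    (N : ℤ) ∈ X.degSet := by
  let xN : ↥(NatBdd R R) := ⟨Pi.single N 1, N, fun n hn => Pi.single_eq_of_ne hn.ne' 1⟩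
  have hcycle : X.smallD (0, xN) = 0 := by
    rw [smallD_eq_zero_iff, X.sumV_eq_of_forall_ne xN N fun i hi => Pi.single_eq_of_ne hi 1, hN]
    simp
  refine ⟨_, ⟨_, hcycle, rfl⟩, ?_, fun m hm => ?_⟩
  · simp [X.iota_apply_of_nonneg _ (Int.natCast_nonneg N), xN]
  · rw [X.iota_apply_of_nonneg _ (by omega)]
    exact Pi.single_eq_of_ne (by omega) 1

theorem neg_le_of_mem_degSet {N : ℕ} (hN : X.v ^ N = 0) {n : ℤ} (hn : n ∈ X.degSet) :
    -(N : ℤ) ≤ n := by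
  obtain ⟨_, ⟨z, -, rfl⟩, hne, -⟩ := hn
  by_contra! hlt
  rw [X.iota_apply_of_neg z (by omega), pow_eq_zero_of_le (by omega) hN] at hne
  simp at hne

theorem isLeast_degSet_of_hInv_eq_zero [Nontrivial R] (hv : IsNilpotent X.v) (h0 : X.hInv = 0) :
    IsLeast X.degSet 0 := by
  obtain ⟨N, hN⟩ := hv
  have hbdd : BddBelow X.degSet := ⟨_, fun n hn => X.neg_le_of_mem_degSet hN hn⟩
  have hsInf : sInf X.degSet = 0 := neg_eq_zero.mp h0
  exact hsInf ▸ ⟨Int.csInf_mem ⟨_, X.mem_degSet_of_v_pow_eq_zero hN⟩ hbdd,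
    fun n hn => csInf_le hbdd hn⟩

theorem δ₁_eq_zero_of_d_eq_zero (hdeg : ∀ n ∈ X.degSet, 0 ≤ n) {ξ : X.Tot} (hξ : X.d ξ = 0) :
    X.δ₁ ξ = 0 := by
  by_contra hne
  have hcycle : X.smallD (ξ, 0) = 0 := by
    rw [smallD_eq_zero_iff, X.sumV_eq_of_forall_ne 0 0 fun _ _ => rfl]
    simpa using hξ
  obtain ⟨n, -, hQn, hQtop⟩ := IntBdd.exists_degEq (X.iota (ξ, 0)) (m := -1)
    (by simpa [X.iota_apply_of_neg _ (show (-1 : ℤ) < 0 by norm_num)] using hne)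
  have hn : 0 ≤ n := hdeg n ⟨_, ⟨_, hcycle, rfl⟩, hQn, hQtop⟩
  exact hQn (by rw [X.iota_apply_of_nonneg _ hn]; rfl)

end SmallComplex

variable {R : Type u}

theorem exists_d_eq_δ₂_one [Field R] {X : SComplexData R} (h : 0 ∈ X.degSet) :
    ∃ α, X.d α = X.δ₂ 1 := by
  obtain ⟨_, ⟨z, hz, rfl⟩, ha, htop⟩ := h
  rw [X.iota_apply_of_nonneg z le_rfl, Int.toNat_zero] at ha
  have hconst : ∀ i ≠ 0, z.2.1 i = 0 := fun i hi => by
    simpa [X.iota_apply_of_nonneg z (Int.natCast_nonneg i)] using htop i (by omega)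
  refine ⟨(z.2.1 0)⁻¹ • z.1, ?_⟩
  rw [map_smul, (X.smallD_eq_zero_iff z).mp hz, X.sumV_eq_of_forall_ne z.2 0 hconst, pow_zero,
    Module.End.one_apply, ← map_smul, smul_eq_mul, inv_mul_cancel₀ ha]

open DirectSum in
theorem exists_mem_grading_d_eq_δ₂_one [CommRing R] {X : SComplexData R} (hX : X.IsSComplex)
    {β : X.Tot} (hβ : X.d β = X.δ₂ 1) : ∃ α ∈ X.grading (-1), X.d α = X.δ₂ 1 := by
  let := hX.internal.chooseDecomposition
  have hcomm := LinearMap.congr_fun (gradedProj_comp_of_map_le _ _ X.d 1 hX.d_deg (-1)) β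
  norm_num only [LinearMap.comp_apply, hβ] at hcomm
  rw [gradedProj_of_mem_same _ (hX.δ₂_deg ⟨1, rfl⟩)] at hcomm
  exact ⟨_, gradedProj_mem _ _ β, hcomm.symm⟩

open DirectSum in
theorem exists_comp_d_add_δ₁_eq_zero [Field R] {X : SComplexData R} (hX : X.IsSComplex)
    (hker : ∀ ξ, X.d ξ = 0 → X.δ₁ ξ = 0) :
    ∃ Δ : X.Tot →ₗ[R] R, (∀ i ≠ 0, ∀ x ∈ X.grading i, Δ x = 0) ∧ Δ ∘ₗ X.d + X.δ₁ = 0 := by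
  let := hX.internal.chooseDecomposition
  have hann : X.δ₁ ∈ (LinearMap.ker X.d).dualAnnihilator :=
    (Submodule.mem_dualAnnihilator _).mpr fun ξ hξ => hker ξ hξ
  obtain ⟨g, hg⟩ := (LinearMap.range_dualMap_eq_dualAnnihilator_ker X.d).ge hann
  replace hg : g ∘ₗ X.d = X.δ₁ := hg
  refine ⟨-(g ∘ₗ gradedProj X.grading 0), fun i hi x hx => ?_, ?_⟩
  · simp [gradedProj_of_mem_ne _ hx hi]
  · have hcomm := gradedProj_comp_of_map_le _ _ X.d 1 hX.d_deg 1
    rw [sub_self] at hcomm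
    rw [LinearMap.neg_comp, LinearMap.comp_assoc, hcomm, ← LinearMap.comp_assoc,
      hg, comp_gradedProj_of_forall_ne _ _ hX.δ₁_deg, neg_add_cancel]

instance [CommRing R] : Subsingleton (trivialS R).Tot :=
  inferInstanceAs (Subsingleton PUnit)

namespace SMorphism

variable [CommRing R] {X : SComplexData R}

noncomputable def fromTrivial (α : X.Tot) (hα : α ∈ X.grading (-1)) (hdα : X.d α = X.δ₂ 1) :
    SMorphism (trivialS R) X where
  l := 0
  μ := 0
  Δ₁ := 0
  Δ₂ := LinearMap.toSpanSingleton R X.Tot α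
  l_deg _ := by simp
  μ_deg _ := by simp
  Δ₁_deg _ _ _ _ := rfl
  Δ₂_deg := by
    rintro _ ⟨r, rfl⟩
    exact Submodule.smul_mem _ r hα
  comm_d := by simp
  comm_δ₁ := by
    ext x
    obtain rfl : x = 0 := Subsingleton.elim _ _
    simp
  comm_δ₂ := by ext; simp [hdα]
  comm_v := by
    ext x
    obtain rfl : x = 0 := Subsingleton.elim _ _
    simp

noncomputable def toTrivial (Δ : X.Tot →ₗ[R] R) (hΔ : ∀ i ≠ 0, ∀ x ∈ X.grading i, Δ x = 0)
    (hΔd : Δ ∘ₗ X.d + X.δ₁ = 0) : SMorphism X (trivialS R) where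
  l := 0
  μ := 0
  Δ₁ := Δ
  Δ₂ := 0
  l_deg _ := by simp
  μ_deg _ := by simp
  Δ₁_deg := hΔ
  Δ₂_deg := by simp
  comm_d := Subsingleton.elim _ _
  comm_δ₁ := hΔd
  comm_δ₂ := Subsingleton.elim _ _
  comm_v := Subsingleton.elim _ _

end SMorphism

end SComplexData

open SComplexData in
/-- **Statement 8.** Over a field `R`, an S-complex with `h(C̃) = 0` is locally
equivalent to the trivial S-complex `C̃⁰ = R`: there is `α ∈ C` with
`d α = δ₂ 1`; the map `λ̃ : C̃⁰ → C̃` with components `λ = 0`, `μ = 0`, `Δ₁ = 0`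
and `Δ₂(1) = α` is a morphism of S-complexes; and there is also a morphism of
S-complexes `C̃ → C̃⁰`. -/
theorem statement8 {R : Type u} [Field R]
    (A : SComplexData R) (hA : A.IsSComplex) (h0 : A.hInv = 0) :
    (∃ α : A.Tot, A.d α = A.δ₂ 1) ∧
    (∃ α : A.Tot, A.d α = A.δ₂ 1 ∧
      ∃ g : SMorphism (trivialS R) A,
        g.l = 0 ∧ g.μ = 0 ∧ g.Δ₁ = 0 ∧ g.Δ₂ 1 = α) ∧
    Nonempty (SMorphism (trivialS R) A) ∧
    Nonempty (SMorphism A (trivialS R)) := by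
  have : IsNoetherian R A.Tot := by have := hA.finite; infer_instance
  have hv : IsNilpotent A.v := hA.internal.isNilpotent_of_map_le A.v two_pos hA.v_deg
  obtain ⟨hzero, hnonneg⟩ := A.isLeast_degSet_of_hInv_eq_zero hv h0
  obtain ⟨α₀, hdα₀⟩ := exists_d_eq_δ₂_one hzero
  obtain ⟨α, hα, hdα⟩ := exists_mem_grading_d_eq_δ₂_one hA hdα₀
  obtain ⟨Δ, hΔ, hΔd⟩ :=
    exists_comp_d_add_δ₁_eq_zero hA fun _ => A.δ₁_eq_zero_of_d_eq_zero hnonneg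
  let g := SMorphism.fromTrivial α hα hdα
  exact ⟨⟨α, hdα⟩, ⟨α, hdα, g, rfl, rfl, rfl, by simp [g, SMorphism.fromTrivial]⟩, ⟨g⟩,
    ⟨SMorphism.toTrivial Δ hΔ hΔd⟩⟩
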